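/- For a graph g and integer k ≥ 1: g contains a clique of size k if and only if there exists x in the probability simplex with x^T A x ≥ (k-1)/k, where A is the adjacency matrix of g. (This gives a reduction from CLIQUE to MIXED KANTIAN EQUILIBRIUM.) -/

import Mathlib

/-! The uniform distribution on a `k`-clique has `xᵀAx = (k-1)/k`. Conversely, if `a`, `b` are
non-adjacent vertices in the support of `x`, the form is affine along `x + t (e_a - e_b)`, so
moving all the mass of one of them onto the other does not decrease `xᵀAx` and shrinks the
support. Repeating, we reach `y` with `xᵀAx ≤ yᵀAy` whose support is a clique, of size `m` say,
and then `yᵀAy ≤ 1 - ∑ yᵢ² ≤ 1 - 1/m` (Cauchy–Schwarz), which is `≥ (k-1)/k` only if `m ≥ k`. -/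

open Matrix Finset

namespace Matrix

variable {n R : Type*} [Fintype n] [CommRing R] {A : Matrix n n R}

lemma IsSymm.dotProduct_mulVec_comm (hA : A.IsSymm) (x y : n → R) :
    x ⬝ᵥ A *ᵥ y = y ⬝ᵥ A *ᵥ x := by
  rw [dotProduct_mulVec, dotProduct_comm, ← mulVec_transpose, hA.eq]

lemma IsSymm.dotProduct_mulVec_add_smul (hA : A.IsSymm) (x u : n → R) (t : R) :
    (x + t • u) ⬝ᵥ A *ᵥ (x + t • u) =
      x ⬝ᵥ A *ᵥ x + 2 * t * (u ⬝ᵥ A *ᵥ x) + t ^ 2 * (u ⬝ᵥ A *ᵥ u) := by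
  simp only [mulVec_add, mulVec_smul, add_dotProduct, dotProduct_add, smul_dotProduct,
    dotProduct_smul, smul_eq_mul, hA.dotProduct_mulVec_comm x u]
  ring

end Matrix

section stdSimplex

variable {V : Type*} [Fintype V] {x : V → ℝ}

lemma card_support_pos_of_mem_stdSimplex (hx : x ∈ stdSimplex ℝ V) :
    0 < #({i | x i ≠ 0} : Finset V) := by
  refine card_pos.2 (nonempty_of_sum_ne_zero (f := x) ?_)
  rw [sum_filter_ne_zero, hx.2]
  exact one_ne_zero

lemma one_div_card_support_le_sum_sq (hx : x ∈ stdSimplex ℝ V) :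
    1 / #{i | x i ≠ 0} ≤ ∑ i, x i ^ 2 := by
  set S : Finset V := {i | x i ≠ 0}
  have hS1 : ∑ i ∈ S, x i = 1 := by rw [sum_filter_ne_zero, hx.2]
  have hS2 : ∑ i ∈ S, x i ^ 2 = ∑ i, x i ^ 2 :=
    sum_filter_of_ne fun i _ h => by simpa using h
  have hSpos : (0 : ℝ) < #S := by exact_mod_cast card_support_pos_of_mem_stdSimplex hx
  rw [div_le_iff₀ hSpos, ← hS2, mul_comm]
  simpa [hS1] using sq_sum_le_card_mul_sum_sq (s := S) (f := x)

variable [DecidableEq V]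

lemma ite_mem_inv_card_mem_stdSimplex {s : Finset V} (hs : s.Nonempty) :
    (fun i => if i ∈ s then (#s : ℝ)⁻¹ else 0) ∈ stdSimplex ℝ V := by
  refine ⟨fun i => by positivity, ?_⟩
  rw [sum_ite_mem, univ_inter, sum_const, nsmul_eq_mul, mul_inv_cancel₀]
  exact_mod_cast hs.card_pos.ne'

lemma add_smul_single_sub_single_mem_stdSimplex (hx : x ∈ stdSimplex ℝ V) {a b : V}
    (hab : a ≠ b) : x + x b • (Pi.single a 1 - Pi.single b 1) ∈ stdSimplex ℝ V := by
  refine ⟨fun i => ?_, ?_⟩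
  · rcases eq_or_ne i b with rfl | hib
    · simp [hab]
    · simp only [Pi.add_apply, Pi.smul_apply, Pi.sub_apply, Pi.single_apply, hib, if_false,
        sub_zero, smul_eq_mul]
      split_ifs <;> nlinarith [hx.1 i, hx.1 b]
  · simp [sum_add_distrib, hx.2, ← mul_sum, sum_sub_distrib]

lemma support_add_smul_single_sub_single_ssubset {a b : V} (ha : x a ≠ 0) (hb : x b ≠ 0)
    (hab : a ≠ b) :
    ({i | (x + x b • (Pi.single a 1 - Pi.single b 1) : V → ℝ) i ≠ 0} : Finset V) ⊂
      ({i | x i ≠ 0} : Finset V) := by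
  rw [ssubset_iff_of_subset]
  · exact ⟨b, by simpa using hb, by simp [hab]⟩
  · intro i
    rcases eq_or_ne i a with rfl | hia
    · simp [ha]
    · rcases eq_or_ne i b with rfl | hib
      · simp [hab]
      · simp [hia, hib]

end stdSimplex

namespace SimpleGraph

variable {V : Type*} [Fintype V] [DecidableEq V] (G : SimpleGraph V) [DecidableRel G.Adj]
  {x : V → ℝ}

lemma dotProduct_mulVec_adjMatrix_ite_mem {s : Finset V} (hs : G.IsClique (s : Set V))
    (c : ℝ) :
    (fun i => if i ∈ s then c else 0) ⬝ᵥ G.adjMatrix ℝ *ᵥ (fun i => if i ∈ s then c else 0) =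
      #s * (#s - 1) * c ^ 2 := by
  have hnbr : ∀ i ∈ s, G.neighborFinset i ∩ s = s.erase i := fun i hi => by
    ext j
    simp only [mem_inter, mem_neighborFinset, mem_erase]
    exact ⟨fun h => ⟨h.1.ne', h.2⟩, fun h => ⟨hs hi h.2 h.1.symm, h.2⟩⟩
  calc _ = ∑ i ∈ s, c * ∑ j ∈ G.neighborFinset i ∩ s, c := by
        simp only [dotProduct, adjMatrix_mulVec_apply, ite_mul, zero_mul, sum_ite_mem, univ_inter]
    _ = ∑ i ∈ s, c * ((#s - 1) * c) := sum_congr rfl fun i hi => by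
        rw [hnbr i hi, sum_const, card_erase_of_mem hi, nsmul_eq_mul,
          Nat.cast_pred (card_pos.2 ⟨i, hi⟩)]
    _ = #s * (#s - 1) * c ^ 2 := by rw [sum_const, nsmul_eq_mul]; ring

lemma dotProduct_mulVec_adjMatrix_le_one_sub_sum_sq (hx : x ∈ stdSimplex ℝ V) :
    x ⬝ᵥ G.adjMatrix ℝ *ᵥ x ≤ 1 - ∑ i, x i ^ 2 := by
  have hnbr : ∀ i, ∑ j ∈ G.neighborFinset i, x j ≤ 1 - x i := fun i => by
    rw [← hx.2, ← add_sum_erase _ _ (mem_univ i), add_sub_cancel_left]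
    refine sum_le_sum_of_subset_of_nonneg (fun j hj => ?_) fun j _ _ => hx.1 j
    exact mem_erase.2 ⟨(G.ne_of_adj ((G.mem_neighborFinset i j).1 hj)).symm, mem_univ j⟩
  calc x ⬝ᵥ G.adjMatrix ℝ *ᵥ x = ∑ i, x i * ∑ j ∈ G.neighborFinset i, x j := by
        simp [dotProduct]
    _ ≤ ∑ i, x i * (1 - x i) :=
        sum_le_sum fun i _ => mul_le_mul_of_nonneg_left (hnbr i) (hx.1 i)
    _ = 1 - ∑ i, x i ^ 2 := by simp [mul_sub, sum_sub_distrib, sq, hx.2]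

lemma exists_support_ssubset_le_of_not_adj (hx : x ∈ stdSimplex ℝ V) {a b : V}
    (ha : x a ≠ 0) (hb : x b ≠ 0) (hab : a ≠ b) (hnadj : ¬ G.Adj a b) :
    ∃ y ∈ stdSimplex ℝ V, ({i | y i ≠ 0} : Finset V) ⊂ ({i | x i ≠ 0} : Finset V) ∧
      x ⬝ᵥ G.adjMatrix ℝ *ᵥ x ≤ y ⬝ᵥ G.adjMatrix ℝ *ᵥ y := by
  wlog hle : (G.adjMatrix ℝ *ᵥ x) b ≤ (G.adjMatrix ℝ *ᵥ x) a generalizing a b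
  · exact this hb ha hab.symm (fun h => hnadj h.symm) (le_of_not_ge hle)
  set u : V → ℝ := Pi.single a 1 - Pi.single b 1
  have hux : u ⬝ᵥ G.adjMatrix ℝ *ᵥ x = (G.adjMatrix ℝ *ᵥ x) a - (G.adjMatrix ℝ *ᵥ x) b := by
    simp [u, sub_dotProduct]
  have huu : u ⬝ᵥ G.adjMatrix ℝ *ᵥ u = 0 := by
    simp [u, sub_dotProduct, mulVec_sub, hnadj, G.adj_comm]
  refine ⟨x + x b • u, add_smul_single_sub_single_mem_stdSimplex hx hab,
    support_add_smul_single_sub_single_ssubset ha hb hab, ?_⟩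
  rw [G.isSymm_adjMatrix.dotProduct_mulVec_add_smul, hux, huu]
  nlinarith [hx.1 b]

lemma exists_isClique_support_le (hx : x ∈ stdSimplex ℝ V) :
    ∃ y ∈ stdSimplex ℝ V, G.IsClique (({i | y i ≠ 0} : Finset V) : Set V) ∧
      x ⬝ᵥ G.adjMatrix ℝ *ᵥ x ≤ y ⬝ᵥ G.adjMatrix ℝ *ᵥ y := by
  induction hS : ({i | x i ≠ 0} : Finset V) using Finset.strongInduction generalizing x with
  | H S ih =>
    by_cases hcl : G.IsClique (S : Set V)
    · exact ⟨x, hx, hS ▸ hcl, le_rfl⟩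
    obtain ⟨a, ha, b, hb, hab, hnadj⟩ : ∃ a ∈ S, ∃ b ∈ S, a ≠ b ∧ ¬ G.Adj a b := by
      simpa [IsClique, Set.Pairwise] using hcl
    subst hS
    obtain ⟨y, hy, hyx, hxy⟩ := G.exists_support_ssubset_le_of_not_adj hx
      (mem_filter.1 ha).2 (mem_filter.1 hb).2 hab hnadj
    obtain ⟨z, hz, hzcl, hyz⟩ := ih _ hyx hy rfl
    exact ⟨z, hz, hzcl, hxy.trans hyz⟩

end SimpleGraph

/-- Reduction from CLIQUE to MIXED KANTIAN EQUILIBRIUM: a graph g has a clique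
of size k (k ≥ 1) iff there is a point x of the probability simplex with
xᵀAx ≥ (k-1)/k, A being the adjacency matrix of g. -/
theorem clique_iff_mixed_kantian (N : ℕ) (g : SimpleGraph (Fin N))
    [DecidableRel g.Adj] (k : ℕ) (hk : 1 ≤ k) :
    (∃ s : Finset (Fin N), g.IsNClique k s) ↔
    (∃ x : Fin N → ℝ, (∀ i, 0 ≤ x i) ∧ (∑ i, x i = 1) ∧
      ((k:ℝ) - 1) / k ≤ x ⬝ᵥ ((g.adjMatrix ℝ).mulVec x)) := by
  have hk₀ : (0 : ℝ) < k := by exact_mod_cast hk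
  constructor
  · rintro ⟨s, hs⟩
    have hs₀ : s.Nonempty := card_pos.1 (hs.card_eq ▸ hk)
    obtain ⟨hx₀, hx₁⟩ := ite_mem_inv_card_mem_stdSimplex hs₀
    refine ⟨_, hx₀, hx₁, le_of_eq ?_⟩
    rw [g.dotProduct_mulVec_adjMatrix_ite_mem hs.isClique, hs.card_eq]
    field_simp
  · rintro ⟨x, hx₀, hx₁, hq⟩
    obtain ⟨y, hy, hycl, hxy⟩ := g.exists_isClique_support_le ⟨hx₀, hx₁⟩
    by_contra hno
    have hcard : #({i | y i ≠ 0} : Finset (Fin N)) < k := by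
      by_contra! hle
      obtain ⟨t, hts, htk⟩ := exists_subset_card_eq hle
      exact hno ⟨t, hycl.subset hts, htk⟩
    have hinv : 1 / (k : ℝ) < 1 / #({i | y i ≠ 0} : Finset (Fin N)) :=
      one_div_lt_one_div_of_lt (by exact_mod_cast card_support_pos_of_mem_stdSimplex hy)
        (by exact_mod_cast hcard)
    have hqy := g.dotProduct_mulVec_adjMatrix_le_one_sub_sum_sq hy
    have hsq := one_div_card_support_le_sum_sq hy
    rw [sub_div, div_self hk₀.ne'] at hq
    linarith
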